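/- Let n ≥ 1 be a natural number and let ν = 1/(n²π²). If v : ℝ → ℝ is four times continuously differentiable on [−1,1], satisfies v''(x) + ν·v''''(x) = 0 for all x ∈ [−1,1], and satisfies v(−1) = v(1) = 0 and v''(−1) = v''(1) = 0, then there exists c ∈ ℝ such that v(x) = c·sin(nπx) for all x ∈ [−1,1]. In particular, the kernel of the linearization at this parameter value, subject to Dirichlet boundary conditions, is one-dimensional and spanned by sin(nπx). -/

import Mathlib

/-!
With `k = nπ` we have `ν k² = 1`, so `w = v''` solves `w'' = -k² w` and is therefore
`A cos(kx) + B sin(kx)`; since `sin k = 0` and `cos k = ±1`, the condition `v''(1) = 0` forces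
`A = 0`. Then `v + (B/k²) sin(kx)` has vanishing second derivative, so it is affine, and it
vanishes at `±1`, hence everywhere: `v = -(B/k²) sin(kx)`.
-/

open Set Real

theorem ContDiffOn.hasDerivWithinAt_iteratedDerivWithin {𝕜 F : Type*}
    [NontriviallyNormedField 𝕜] [NormedAddCommGroup F] [NormedSpace 𝕜 F] {f : 𝕜 → F}
    {s : Set 𝕜} {n : WithTop ℕ∞} {m : ℕ}
    (hf : ContDiffOn 𝕜 n f s) (hs : UniqueDiffOn 𝕜 s) (hm : m < n) {x : 𝕜} (hx : x ∈ s) :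
    HasDerivWithinAt (iteratedDerivWithin m f s) (iteratedDerivWithin (m + 1) f s x) s x := by
  rw [iteratedDerivWithin_succ]
  exact (hf.differentiableOn_iteratedDerivWithin hm hs x hx).hasDerivWithinAt

section ConvexDomain

variable {s : Set ℝ}

theorem Convex.is_const_of_hasDerivWithinAt_zero (hs : Convex ℝ s) {f : ℝ → ℝ}
    (hf : ∀ x ∈ s, HasDerivWithinAt f 0 s x) {x y : ℝ} (hx : x ∈ s) (hy : y ∈ s) :
    f x = f y := by
  have := norm_image_sub_le_of_norm_hasDerivWithin_le hf (fun _ _ => norm_zero.le) hs hx hy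
  rw [zero_mul, norm_le_zero_iff, sub_eq_zero] at this
  exact this.symm

theorem Convex.exists_eq_cos_sin_of_hasDerivWithinAt (hs : Convex ℝ s) {k : ℝ} (hk : k ≠ 0)
    {w w' : ℝ → ℝ} (hw : ∀ x ∈ s, HasDerivWithinAt w (w' x) s x)
    (hw' : ∀ x ∈ s, HasDerivWithinAt w' (-(k ^ 2 * w x)) s x) :
    ∃ A B : ℝ, ∀ x ∈ s, w x = A * cos (k * x) + B * sin (k * x) := by
  rcases s.eq_empty_or_nonempty with rfl | ⟨x₀, hx₀⟩
  · exact ⟨0, 0, fun _ hx => hx.elim⟩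
  -- the coordinates of `(w, w'/k)` in the frame rotating with angle `k x`
  set a : ℝ → ℝ := fun x => w x * cos (k * x) - w' x / k * sin (k * x)
  set b : ℝ → ℝ := fun x => w x * sin (k * x) + w' x / k * cos (k * x)
  have ha : ∀ x ∈ s, HasDerivWithinAt a 0 s x := fun x hx => by
    refine (((hw x hx).mul (hasDerivAt_const_mul k).cos.hasDerivWithinAt).sub
      (((hw' x hx).div_const k).mul
        (hasDerivAt_const_mul k).sin.hasDerivWithinAt)).congr_deriv ?_
    field_simp
    ring
  have hb : ∀ x ∈ s, HasDerivWithinAt b 0 s x := fun x hx => by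
    refine (((hw x hx).mul (hasDerivAt_const_mul k).sin.hasDerivWithinAt).add
      (((hw' x hx).div_const k).mul
        (hasDerivAt_const_mul k).cos.hasDerivWithinAt)).congr_deriv ?_
    field_simp
    ring
  refine ⟨a x₀, b x₀, fun x hx => ?_⟩
  rw [← hs.is_const_of_hasDerivWithinAt_zero ha hx hx₀,
    ← hs.is_const_of_hasDerivWithinAt_zero hb hx hx₀]
  linear_combination (-w x) * sin_sq_add_cos_sq (k * x)

end ConvexDomain

theorem eq_zero_of_hasDerivWithinAt_zero_of_endpoints {a b : ℝ} {u u' : ℝ → ℝ}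
    (hu : ∀ x ∈ Icc a b, HasDerivWithinAt u (u' x) (Icc a b) x)
    (hu' : ∀ x ∈ Icc a b, HasDerivWithinAt u' 0 (Icc a b) x) (ha : u a = 0) (hb : u b = 0) :
    ∀ x ∈ Icc a b, u x = 0 := by
  intro x hx
  have hab : a ≤ b := hx.1.trans hx.2
  have hslope : ∀ y ∈ Icc a b, u' y = u' a := fun y hy =>
    (convex_Icc a b).is_const_of_hasDerivWithinAt_zero hu' hy (left_mem_Icc.2 hab)
  have hline : ∀ y ∈ Icc a b, u y - u' a * y = u a - u' a * a := fun y hy =>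
    (convex_Icc a b).is_const_of_hasDerivWithinAt_zero (f := fun y => u y - u' a * y)
      (fun z hz => ((hu z hz).sub ((hasDerivWithinAt_id z _).const_mul (u' a))).congr_deriv
        (by simp [hslope z hz]))
      hy (left_mem_Icc.2 hab)
  have hxline := hline x hx
  have hbline := hline b (right_mem_Icc.2 hab)
  rcases mul_eq_zero.1 (show u' a * (b - a) = 0 by linear_combination -hbline - ha + hb)
    with hslope0 | hba
  · rw [hslope0, ha] at hxline
    linarith
  · have : x = a := by linarith [hx.1, hx.2]
    rwa [this]

section SineModes

variable {k : ℝ}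

theorem eq_neg_div_sq_mul_sin_of_hasDerivWithinAt (hk : k ≠ 0) (hsin : sin k = 0) {B : ℝ}
    {u u₁ : ℝ → ℝ}
    (hu : ∀ x ∈ Icc (-1 : ℝ) 1, HasDerivWithinAt u (u₁ x) (Icc (-1) 1) x)
    (hu₁ : ∀ x ∈ Icc (-1 : ℝ) 1, HasDerivWithinAt u₁ (B * sin (k * x)) (Icc (-1) 1) x)
    (hu_neg_one : u (-1) = 0) (hu_one : u 1 = 0) :
    ∀ x ∈ Icc (-1 : ℝ) 1, u x = -(B / k ^ 2) * sin (k * x) := by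
  have hcorr := eq_zero_of_hasDerivWithinAt_zero_of_endpoints
    (u := fun x => u x + B / k ^ 2 * sin (k * x)) (u' := fun x => u₁ x + B / k * cos (k * x))
    (fun x hx => ((hu x hx).add
      ((hasDerivAt_const_mul k).sin.hasDerivWithinAt.const_mul _)).congr_deriv (by field_simp))
    (fun x hx => ((hu₁ x hx).add ((hasDerivAt_const_mul k).cos.hasDerivWithinAt.const_mul _)
      ).congr_deriv (by field_simp; ring))
    (by simp [hu_neg_one, hsin]) (by simp [hu_one, hsin])
  exact fun x hx => by linear_combination hcorr x hx

theorem exists_eq_mul_sin_of_hasDerivWithinAt (hk : k ≠ 0) (hsin : sin k = 0)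
    {v v₁ v₂ v₃ : ℝ → ℝ}
    (hv : ∀ x ∈ Icc (-1 : ℝ) 1, HasDerivWithinAt v (v₁ x) (Icc (-1) 1) x)
    (hv₁ : ∀ x ∈ Icc (-1 : ℝ) 1, HasDerivWithinAt v₁ (v₂ x) (Icc (-1) 1) x)
    (hv₂ : ∀ x ∈ Icc (-1 : ℝ) 1, HasDerivWithinAt v₂ (v₃ x) (Icc (-1) 1) x)
    (hv₃ : ∀ x ∈ Icc (-1 : ℝ) 1, HasDerivWithinAt v₃ (-(k ^ 2 * v₂ x)) (Icc (-1) 1) x)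
    (hv_neg_one : v (-1) = 0) (hv_one : v 1 = 0) (hv₂_one : v₂ 1 = 0) :
    ∃ c : ℝ, ∀ x ∈ Icc (-1 : ℝ) 1, v x = c * sin (k * x) := by
  obtain ⟨A, B, hv₂_eq⟩ :=
    (convex_Icc (-1 : ℝ) 1).exists_eq_cos_sin_of_hasDerivWithinAt hk hv₂ hv₃
  have hA : A = 0 := by
    have hcos : cos k ≠ 0 := by rcases sin_eq_zero_iff_cos_eq.1 hsin with h | h <;> simp [h]
    have := hv₂_eq 1 (right_mem_Icc.2 (by norm_num))
    rw [hv₂_one, mul_one, hsin, mul_zero, add_zero] at this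
    exact (mul_eq_zero.1 this.symm).resolve_right hcos
  refine ⟨-(B / k ^ 2), eq_neg_div_sq_mul_sin_of_hasDerivWithinAt hk hsin hv
    (fun x hx => (hv₁ x hx).congr_deriv ?_) hv_neg_one hv_one⟩
  rw [hv₂_eq x hx, hA, zero_mul, zero_add]

end SineModes

theorem dirichlet_kernel_sin_general (n : ℕ) (hn : 1 ≤ n) (ν : ℝ)
    (hν : ν = 1 / ((n : ℝ) ^ 2 * Real.pi ^ 2))
    (v : ℝ → ℝ)
    (hsmooth : ContDiffOn ℝ 4 v (Icc (-1 : ℝ) 1))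
    (heq : ∀ x ∈ Icc (-1 : ℝ) 1,
      iteratedDerivWithin 2 v (Icc (-1 : ℝ) 1) x
        + ν * iteratedDerivWithin 4 v (Icc (-1 : ℝ) 1) x = 0)
    (hbc1 : v (-1) = 0) (hbc2 : v 1 = 0)
    (hbc4 : iteratedDerivWithin 2 v (Icc (-1 : ℝ) 1) 1 = 0) :
    ∃ c : ℝ, ∀ x ∈ Icc (-1 : ℝ) 1, v x = c * Real.sin ((n : ℝ) * Real.pi * x) := by
  set D : ℕ → ℝ → ℝ := fun m => iteratedDerivWithin m v (Icc (-1 : ℝ) 1)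
  have hD : ∀ m < 4, ∀ x ∈ Icc (-1 : ℝ) 1,
      HasDerivWithinAt (D m) (D (m + 1) x) (Icc (-1) 1) x :=
    fun m hm x hx => hsmooth.hasDerivWithinAt_iteratedDerivWithin
      (uniqueDiffOn_Icc (by norm_num)) (by exact_mod_cast hm) hx
  have hνk : ν * (n * π) ^ 2 = 1 := by rw [hν]; field_simp
  have hD₄ : ∀ x ∈ Icc (-1 : ℝ) 1, D 4 x = -((n * π) ^ 2 * D 2 x) := fun x hx => by
    linear_combination (n * π) ^ 2 * heq x hx - D 4 x * hνk
  exact exists_eq_mul_sin_of_hasDerivWithinAt (by positivity) (sin_nat_mul_pi n)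
    (hD 0 (by norm_num)) (hD 1 (by norm_num)) (hD 2 (by norm_num))
    (fun x hx => (hD 3 (by norm_num) x hx).congr_deriv (hD₄ x hx)) hbc1 hbc2 hbc4

/-- The kernel of the linearization `L v = v'' + ν v''''` of the steady
Kuramoto–Sivashinsky equation at the zero solution, with Dirichlet boundary
conditions on `[-1,1]`, at the bifurcation value `ν = 1/(n²π²)`,
is spanned by `sin(nπx)`. -/
theorem dirichlet_kernel_sin (n : ℕ) (hn : 1 ≤ n) (ν : ℝ)
    (hν : ν = 1 / ((n : ℝ) ^ 2 * Real.pi ^ 2))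
    (v : ℝ → ℝ)
    (hsmooth : ContDiffOn ℝ 4 v (Icc (-1 : ℝ) 1))
    (heq : ∀ x ∈ Icc (-1 : ℝ) 1,
      iteratedDerivWithin 2 v (Icc (-1 : ℝ) 1) x
        + ν * iteratedDerivWithin 4 v (Icc (-1 : ℝ) 1) x = 0)
    (hbc1 : v (-1) = 0) (hbc2 : v 1 = 0)
    (hbc3 : iteratedDerivWithin 2 v (Icc (-1 : ℝ) 1) (-1) = 0)
    (hbc4 : iteratedDerivWithin 2 v (Icc (-1 : ℝ) 1) 1 = 0) :
    ∃ c : ℝ, ∀ x ∈ Icc (-1 : ℝ) 1, v x = c * Real.sin ((n : ℝ) * Real.pi * x) :=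
  dirichlet_kernel_sin_general n hn ν hν v hsmooth heq hbc1 hbc2 hbc4
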